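/- Let d = 3 and define the local rule f : Fin 3 → Fin 3 → Fin 3 → Fin 3 by f x y z = z if y = 0, f x y z = z + 1 (mod 3) if y = 1, and f x y z = −z (mod 3, i.e. 0↦0, 1↦2, 2↦1) if y = 2 (the 3-state CA rule 120021210120021210120021210). Then for every odd n ≥ 3, the global map F of the n-cell periodic-boundary CA is bijective. -/

import Mathlib

/-!
The new state of cell `i` is `g_{c i} (c (i + 1))` for the permutations `g_0 = id`, `g_1 = (· + 1)`,
`g_2 = (-·)` of `Fin 3`. If two configurations have the same image and agree at one cell, they agree
at the next one, hence everywhere. Otherwise they disagree at every cell, and the pairs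
`(c i, c' i)` follow a transition graph on the six pairs of distinct states whose only cycles lie
either in `{(0,1), (1,0)}` or in `{(0,2), (2,0), (1,2), (2,1)}`. Both of these are bipartite, so
each cell flips a two-colouring of the pairs and the cycle length `n` must be even.
-/

def f12 : Fin 3 → Fin 3 → Fin 3 → Fin 3 :=
  fun _ y z => if y = 0 then z else if y = 1 then z + 1 else -z

namespace ZMod

variable {n : ℕ}

theorem forall_of_imp_add_one [NeZero n] {P : ZMod n → Prop} (h : ∀ i, P i → P (i + 1))
    {i : ZMod n} (hi : P i) (j : ZMod n) : P j := by
  have hk : ∀ k : ℕ, P (i + k) := by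
    intro k
    induction k with
    | zero => simpa using hi
    | succ k ih => simpa [add_assoc] using h _ ih
  simpa using hk (j - i).val

theorem even_of_forall_add_one_iff_not {P : ZMod n → Prop} (h : ∀ i, P (i + 1) ↔ ¬P i) :
    Even n := by
  have hk : ∀ k : ℕ, (P k ↔ P 0) ↔ Even k := by
    intro k
    induction k with
    | zero => simp
    | succ k ih => rw [Nat.cast_succ, h, Nat.even_add_one, ← ih, not_iff]
  simpa using hk n

end ZMod

theorem eq_of_image_eq_of_eq_at {n : ℕ} [NeZero n] {α β : Type*} {f : α → α → α → β}
    (hf : ∀ x x' y z z', f x y z = f x' y z' → z = z') {c c' : ZMod n → α}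
    (h : ∀ i, f (c (i - 1)) (c i) (c (i + 1)) = f (c' (i - 1)) (c' i) (c' (i + 1)))
    {i : ZMod n} (hi : c i = c' i) : c = c' :=
  funext <| ZMod.forall_of_imp_add_one (P := fun j => c j = c' j)
    (fun j hj => hf _ _ _ _ _ (hj ▸ h j)) hi

abbrev IsSwap (y y' : Fin 3) : Prop := y = 0 ∧ y' = 1 ∨ y = 1 ∧ y' = 0

theorem f12_cancel_right : ∀ x x' y z z', f12 x y z = f12 x' y z' → z = z' := by
  decide

theorem isSwap_of_f12_eq : ∀ x x' y y' z z',
    f12 x y z = f12 x' y' z' → IsSwap z z' → IsSwap y y' := by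
  decide

theorem eq_zero_iff_ne_zero_of_f12_eq : ∀ x x' y y' z z',
    f12 x y z = f12 x' y' z' → IsSwap y y' → IsSwap z z' → (z = 0 ↔ ¬y = 0) := by
  decide

theorem eq_one_or_eq_one_iff_not_of_f12_eq : ∀ x x' y y' z z', y ≠ y' → z ≠ z' →
    ¬IsSwap y y' → ¬IsSwap z z' → f12 x y z = f12 x' y' z' →
    (z = 1 ∨ z' = 1 ↔ ¬(y = 1 ∨ y' = 1)) := by
  decide

theorem stmt_12_general (n : ℕ) (hodd : Odd n) :
    Function.Bijective
      (fun (c : ZMod n → Fin 3) (i : ZMod n) => f12 (c (i - 1)) (c i) (c (i + 1))) := by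
  have : NeZero n := ⟨by rintro rfl; simp at hodd⟩
  rw [← Finite.injective_iff_bijective]
  intro c c' h
  have hF := congrFun h
  by_contra hne
  have hdis : ∀ i, c i ≠ c' i := fun i hi =>
    hne (eq_of_image_eq_of_eq_at f12_cancel_right hF hi)
  -- Swapped pairs are only reached from swapped pairs, so along the cycle either all or none are.
  have hswap : (∀ i, IsSwap (c i) (c' i)) ∨ ∀ i, ¬IsSwap (c i) (c' i) := by
    by_cases hA : ∃ i, IsSwap (c i) (c' i)
    · obtain ⟨i, hi⟩ := hA
      refine .inl fun j => by_contra fun hj => ?_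
      exact ZMod.forall_of_imp_add_one (P := fun k => ¬IsSwap (c k) (c' k))
        (fun k hk hk1 => hk (isSwap_of_f12_eq _ _ _ _ _ _ (hF k) hk1)) hj i hi
    · exact .inr (not_exists.1 hA)
  refine Nat.not_even_iff_odd.2 hodd ?_
  rcases hswap with hA | hB
  · exact ZMod.even_of_forall_add_one_iff_not (P := fun i => c i = 0) fun i =>
      eq_zero_iff_ne_zero_of_f12_eq _ _ _ _ _ _ (hF i) (hA i) (hA (i + 1))
  · exact ZMod.even_of_forall_add_one_iff_not (P := fun i => c i = 1 ∨ c' i = 1) fun i =>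
      eq_one_or_eq_one_iff_not_of_f12_eq _ _ _ _ _ _ (hdis i) (hdis (i + 1)) (hB i)
        (hB (i + 1)) (hF i)

theorem stmt_12 (n : ℕ) (hn : 3 ≤ n) (hodd : Odd n) :
    Function.Bijective
      (fun (c : ZMod n → Fin 3) (i : ZMod n) => f12 (c (i - 1)) (c i) (c (i + 1))) :=
  stmt_12_general n hodd
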